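/- arXiv:2202.08584 — 3 statements merged into one kernel-verified Lean document; each statement's English description precedes it below -/
import Mathlib

section
/- Well-balanced prediction step: let Ũ : ℤ² → ℝ⁸ be a grid function with positive first component at every node, and let U^n : ℤ² → ℝ⁸ satisfy U^n_{i,j} = Ũ_{i,j} for all (i,j) (so ΔU^n_{i,j} := U^n_{i,j} − Ũ_{i,j} = 0). Define the predicted value ΔU^{n+1/2}_{i,j} = ΔU^n_{i,j} + (Δt/2)[ −J_F(U^n_{i,j})·(U^{n,x}_{i,j})/Δx + J_F(Ũ_{i,j})·(Ũ^x_{i,j})/Δx − J_G(U^n_{i,j})·(U^{n,y}_{i,j})/Δy + J_G(Ũ_{i,j})·(Ũ^y_{i,j})/Δy + S(ΔU^n_{i,j}) ], where J_F, J_G are the Jacobians (Fréchet derivatives) of the MHD fluxes F, G, and the slopes U^{n,x}, U^{n,y}, Ũ^x, Ũ^y are the MC-θ limited slopes of the respective nodal data in the x- and y-directions. Then ΔU^{n+1/2}_{i,j} = 0 for all (i,j). -/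
/-- Pressure recovered from the conserved variables
`U = (ρ, ρu₁, ρu₂, ρu₃, E, B₁, B₂, B₃)`:
`E = p/(γ−1) + ½ρ|u|² + ½|B|²`. -/
noncomputable def pres (γ : ℝ) (U : Fin 8 → ℝ) : ℝ :=
  (γ - 1) * (U 4 - ((U 1) ^ 2 + (U 2) ^ 2 + (U 3) ^ 2) / (2 * U 0)
    - ((U 5) ^ 2 + (U 6) ^ 2 + (U 7) ^ 2) / 2)

/-- The `x`-direction flux of the ideal MHD system. -/
noncomputable def Fflux (γ : ℝ) (U : Fin 8 → ℝ) : Fin 8 → ℝ :=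
  ![U 1,
    (U 1) ^ 2 / U 0 + (pres γ U + ((U 6) ^ 2 + (U 7) ^ 2 - (U 5) ^ 2) / 2),
    U 1 * U 2 / U 0 + (-(U 5 * U 6)),
    U 1 * U 3 / U 0 + (-(U 5 * U 7)),
    U 4 * (U 1 / U 0) + (U 1 / U 0) * (pres γ U + ((U 6) ^ 2 + (U 7) ^ 2 - (U 5) ^ 2) / 2)
      + (U 2 / U 0) * (-(U 5 * U 6)) + (U 3 / U 0) * (-(U 5 * U 7)),
    0,
    (U 3 / U 0) * U 5 - (U 1 / U 0) * U 7,
    -((U 1 / U 0) * U 6 - (U 2 / U 0) * U 5)]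

/-- The `y`-direction flux of the ideal MHD system. -/
noncomputable def Gflux (γ : ℝ) (U : Fin 8 → ℝ) : Fin 8 → ℝ :=
  ![U 2,
    U 2 * U 1 / U 0 + (-(U 6 * U 5)),
    (U 2) ^ 2 / U 0 + (pres γ U + ((U 5) ^ 2 + (U 7) ^ 2 - (U 6) ^ 2) / 2),
    U 2 * U 3 / U 0 + (-(U 6 * U 7)),
    U 4 * (U 2 / U 0) + (U 1 / U 0) * (-(U 6 * U 5))
      + (U 2 / U 0) * (pres γ U + ((U 5) ^ 2 + (U 7) ^ 2 - (U 6) ^ 2) / 2)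
      + (U 3 / U 0) * (-(U 6 * U 7)),
    -((U 1 / U 0) * U 6 - (U 2 / U 0) * U 5),
    0,
    (U 2 / U 0) * U 7 - (U 3 / U 0) * U 6]

/-- Gravitational source term `S(U) = (0, 0, −ρg, 0, −ρu₂ g, 0, 0, 0)`. -/
noncomputable def Ssrc (g : ℝ) (U : Fin 8 → ℝ) : Fin 8 → ℝ :=
  ![0, 0, -(U 0) * g, 0, -(U 2) * g, 0, 0, 0]

/-- `minmod(a,b,c) = sign(a)·min(|a|,|b|,|c|)` if all three signs agree, `0` otherwise. -/
noncomputable def minmod3 (a b c : ℝ) : ℝ :=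
  if Real.sign a = Real.sign b ∧ Real.sign b = Real.sign c then
    Real.sign a * min |a| (min |b| |c|)
  else 0

/-- Componentwise MC-θ limited slope in the `x`-direction of grid data `V : ℤ² → ℝ⁸`. -/
noncomputable def slopeX (θ : ℝ) (V : ℤ → ℤ → Fin 8 → ℝ) (i j : ℤ) : Fin 8 → ℝ :=
  fun k => minmod3 (θ * (V i j k - V (i - 1) j k))
    ((V (i + 1) j k - V (i - 1) j k) / 2) (θ * (V (i + 1) j k - V i j k))

/-- Componentwise MC-θ limited slope in the `y`-direction of grid data `V : ℤ² → ℝ⁸`. -/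
noncomputable def slopeY (θ : ℝ) (V : ℤ → ℤ → Fin 8 → ℝ) (i j : ℤ) : Fin 8 → ℝ :=
  fun k => minmod3 (θ * (V i j k - V i (j - 1) k))
    ((V i (j + 1) k - V i (j - 1) k) / 2) (θ * (V i (j + 1) k - V i j k))

/-- Prediction step: `ΔU^{n+1/2}_{i,j} = ΔU^n_{i,j} + (Δt/2)[−J_F(U^n)·U^{n,x}/Δx
+ J_F(Ũ)·Ũ^x/Δx − J_G(U^n)·U^{n,y}/Δy + J_G(Ũ)·Ũ^y/Δy + S(ΔU^n)]`, where `J_F`, `J_G`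
are the Fréchet derivatives (Jacobians) of the MHD fluxes and the slopes are MC-θ limited. -/
noncomputable def predStep (γ g θ Δt Δx Δy : ℝ) (Ut Un : ℤ → ℤ → Fin 8 → ℝ) :
    ℤ → ℤ → Fin 8 → ℝ := fun i j =>
  (Un i j - Ut i j)
    + (Δt / 2) •
      (-((Δx)⁻¹ • fderiv ℝ (Fflux γ) (Un i j) (slopeX θ Un i j))
        + (Δx)⁻¹ • fderiv ℝ (Fflux γ) (Ut i j) (slopeX θ Ut i j)
        - (Δy)⁻¹ • fderiv ℝ (Gflux γ) (Un i j) (slopeY θ Un i j)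
        + (Δy)⁻¹ • fderiv ℝ (Gflux γ) (Ut i j) (slopeY θ Ut i j)
        + Ssrc g (Un i j - Ut i j))

/-- Well-balanced prediction step: if the nodal data `U^n` coincide with
the reference steady state `Ũ` (which has positive density at every node), i.e.
`ΔU^n = 0`, then the predicted values `ΔU^{n+1/2}_{i,j}` vanish at every node. -/
theorem prediction_well_balanced (γ g θ Δt Δx Δy : ℝ)
    (hθ₁ : 1 < θ) (hθ₂ : θ < 2) (hΔt : 0 < Δt) (hΔx : 0 < Δx) (hΔy : 0 < Δy)
    (Ut Un : ℤ → ℤ → Fin 8 → ℝ)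
    (hpos : ∀ i j : ℤ, 0 < Ut i j 0)
    (hsteady : ∀ i j : ℤ, Un i j = Ut i j) :
    ∀ i j : ℤ, predStep γ g θ Δt Δx Δy Ut Un i j = 0 := by
  have hU : Un = Ut := funext fun i => funext fun j => hsteady i j
  intro i j
  have hS : Ssrc g ((0 : Fin 8 → ℝ)) = 0 := by
    funext k
    fin_cases k <;> simp only [Ssrc, Pi.zero_apply] <;> norm_num
  simp [predStep, hU, sub_self, hS]
end

section
/- Well-balanced property of the full scheme: let Ũ : ℤ² → ℝ⁸ be a given reference steady state with positive first component at every node, and suppose the numerical solution at time t^n satisfies U^n_{i,j} = Ũ_{i,j} for all (i,j) ∈ ℤ². Perform one full time step of the unstaggered central scheme applied to ΔU = U − Ũ: (i) compute the predicted values ΔU^{n+1/2}_{i,j} via the prediction step using Jacobians of the MHD fluxes F, G and MC-θ limited slopes; (ii) project ΔU^n onto the staggered grid via the forward projection formula with MC-θ slopes; (iii) update the staggered values via the evolution step with forward flux differences of F(ΔU^{n+1/2}+Ũ) − F(Ũ), G(ΔU^{n+1/2}+Ũ) − G(Ũ) and the averaged source term; (iv) project back to the original grid via the back projection formula with MC-θ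 slopes. Then the resulting nodal solution satisfies ΔU^{n+1}_{i,j} = 0, i.e. U^{n+1}_{i,j} = Ũ_{i,j}, for all (i,j) ∈ ℤ²: the scheme preserves the steady state exactly. -/
/-- Forward projection onto the staggered grid: the value at the staggered node
`(i+½, j+½)` (indexed by `(i,j)`) obtained from nodal data `V` and its MC-θ slopes. -/
noncomputable def forwardProj (θ : ℝ) (V : ℤ → ℤ → Fin 8 → ℝ) : ℤ → ℤ → Fin 8 → ℝ :=
  fun i j =>
    (1 / 2 : ℝ) • ((1 / 2 : ℝ) • (V i j + V (i + 1) j)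
        + (1 / 2 : ℝ) • (V i (j + 1) + V (i + 1) (j + 1)))
      - (1 / 16 : ℝ) • ((slopeX θ V (i + 1) j - slopeX θ V i j)
          + (slopeX θ V (i + 1) (j + 1) - slopeX θ V i (j + 1)))
      - (1 / 16 : ℝ) • ((slopeY θ V i (j + 1) - slopeY θ V i j)
          + (slopeY θ V (i + 1) (j + 1) - slopeY θ V (i + 1) j))

/-- Evolution step on the staggered grid with forward flux differences
`D₊ˣF`, `D₊ʸG` and the four-point averaged source term. -/
noncomputable def evolStep (γ g Δt Δx Δy : ℝ) (Ut ΔUstag ΔUhalf : ℤ → ℤ → Fin 8 → ℝ) :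
    ℤ → ℤ → Fin 8 → ℝ := fun i j =>
  ΔUstag i j
    - (Δt / 2) •
      ((Δx)⁻¹ • (Fflux γ (ΔUhalf (i + 1) j + Ut (i + 1) j) - Fflux γ (ΔUhalf i j + Ut i j))
        - (Δx)⁻¹ • (Fflux γ (Ut (i + 1) j) - Fflux γ (Ut i j))
        + (Δx)⁻¹ • (Fflux γ (ΔUhalf (i + 1) (j + 1) + Ut (i + 1) (j + 1))
            - Fflux γ (ΔUhalf i (j + 1) + Ut i (j + 1)))
        - (Δx)⁻¹ • (Fflux γ (Ut (i + 1) (j + 1)) - Fflux γ (Ut i (j + 1))))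
    - (Δt / 2) •
      ((Δy)⁻¹ • (Gflux γ (ΔUhalf i (j + 1) + Ut i (j + 1)) - Gflux γ (ΔUhalf i j + Ut i j))
        - (Δy)⁻¹ • (Gflux γ (Ut i (j + 1)) - Gflux γ (Ut i j))
        + (Δy)⁻¹ • (Gflux γ (ΔUhalf (i + 1) (j + 1) + Ut (i + 1) (j + 1))
            - Gflux γ (ΔUhalf (i + 1) j + Ut (i + 1) j))
        - (Δy)⁻¹ • (Gflux γ (Ut (i + 1) (j + 1)) - Gflux γ (Ut (i + 1) j)))
    + Δt • ((1 / 4 : ℝ) • (Ssrc g (ΔUhalf i j) + Ssrc g (ΔUhalf (i + 1) j)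
        + Ssrc g (ΔUhalf i (j + 1)) + Ssrc g (ΔUhalf (i + 1) (j + 1))))

/-- Back projection onto the original grid: the value at the node `(i,j)` obtained from
staggered data `V` (staggered node `(i+½,j+½)` indexed by `(i,j)`) and its MC-θ slopes. -/
noncomputable def backProj (θ : ℝ) (V : ℤ → ℤ → Fin 8 → ℝ) : ℤ → ℤ → Fin 8 → ℝ :=
  fun i j =>
    (1 / 2 : ℝ) • ((1 / 2 : ℝ) • (V (i - 1) (j - 1) + V i (j - 1))
        + (1 / 2 : ℝ) • (V (i - 1) j + V i j))
      - (1 / 16 : ℝ) • ((slopeX θ V i (j - 1) - slopeX θ V (i - 1) (j - 1))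
          + (slopeX θ V i j - slopeX θ V (i - 1) j))
      - (1 / 16 : ℝ) • ((slopeY θ V (i - 1) j - slopeY θ V (i - 1) (j - 1))
          + (slopeY θ V i j - slopeY θ V i (j - 1)))


lemma zsrc (g : ℝ) : Ssrc g (0 : Fin 8 → ℝ) = 0 := by
  funext k; fin_cases k <;> norm_num [Ssrc, Matrix.cons_val_succ, Matrix.cons_val_zero]

lemma minmod3_zero : minmod3 0 0 0 = 0 := by simp [minmod3]

lemma slopeX_zero (θ : ℝ) (i j : ℤ) :
    slopeX θ (fun _ _ => (0 : Fin 8 → ℝ)) i j = 0 := by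
  funext k; simp [slopeX, minmod3_zero]

lemma slopeY_zero (θ : ℝ) (i j : ℤ) :
    slopeY θ (fun _ _ => (0 : Fin 8 → ℝ)) i j = 0 := by
  funext k; simp [slopeY, minmod3_zero]

/-- Well-balanced property of the full scheme: if the numerical solution
at time `t^n` coincides with the reference steady state `Ũ` (positive density at every
node), then after one full time step of the unstaggered central scheme — prediction,
forward projection, evolution, back projection — the nodal solution satisfies
`ΔU^{n+1}_{i,j} = 0`, i.e. `U^{n+1}_{i,j} = Ũ_{i,j}`: the steady state is preserved
exactly. -/
theorem full_scheme_well_balanced (γ g θ Δt Δx Δy : ℝ)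
    (hθ₁ : 1 < θ) (hθ₂ : θ < 2) (hΔt : 0 < Δt) (hΔx : 0 < Δx) (hΔy : 0 < Δy)
    (Ut Un : ℤ → ℤ → Fin 8 → ℝ)
    (hpos : ∀ i j : ℤ, 0 < Ut i j 0)
    (hsteady : ∀ i j : ℤ, Un i j = Ut i j) :
    ∀ i j : ℤ,
      backProj θ
        (evolStep γ g Δt Δx Δy Ut
          (forwardProj θ (fun i' j' => Un i' j' - Ut i' j'))
          (predStep γ g θ Δt Δx Δy Ut Un)) i j = 0
      ∧ backProj θ
          (evolStep γ g Δt Δx Δy Ut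
            (forwardProj θ (fun i' j' => Un i' j' - Ut i' j'))
            (predStep γ g θ Δt Δx Δy Ut Un)) i j + Ut i j = Ut i j := by
  have hU : Un = Ut := funext fun i => funext fun j => hsteady i j
  subst hU
  have hΔ : (fun i' j' => Un i' j' - Un i' j') = fun _ _ => (0 : Fin 8 → ℝ) := by
    funext i j; exact sub_self _
  have hpred : predStep γ g θ Δt Δx Δy Un Un = fun _ _ => 0 := by
    funext i j
    simp only [predStep, sub_self, zsrc, add_zero, neg_add_cancel, zero_add]
    abel_nf
    simp
  have hfwd : forwardProj θ (fun _ _ => (0 : Fin 8 → ℝ)) = fun _ _ => 0 := by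
    funext i j
    simp [forwardProj, slopeX_zero, slopeY_zero]
  have hevol : evolStep γ g Δt Δx Δy Un (fun _ _ => 0) (fun _ _ => 0) = fun _ _ => 0 := by
    funext i j
    simp [evolStep, zsrc]
  have hback : ∀ i j, backProj θ (fun _ _ => (0 : Fin 8 → ℝ)) i j = 0 := by
    intro i j
    simp [backProj, slopeX_zero, slopeY_zero]
  intro i j
  rw [hΔ, hfwd, hpred, hevol]
  exact ⟨hback i j, by rw [hback i j, zero_add]⟩
end

section
/- The MHD vortex is a stationary solution of the homogeneous ideal MHD equations: for constants κ_p, m_p ∈ ℝ, γ > 1, let r² = x² + y² and define on ℝ² the fields ρ ≡ 1, u = (−κ_p e^{(1−r²)/2} y, κ_p e^{(1−r²)/2} x, 0), B = (−m_p e^{(1−r²)/2} y, m_p e^{(1−r²)/2} x, 0), p(x,y) = 1 + ½(m_p²(1−r²) − κ_p²) e^{1−r²}, and E = p/(γ−1) + ½(u₁²+u₂²) + ½(B₁²+B₂²). Assume p > 0 everywhere on the considered domain. Then the conserved vector Ũ = (ρ, ρu₁, ρu₂, 0, E, B₁, B₂, 0) satisfies F(Ũ)_x + G(Ũ)_y =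 0 at every point, i.e. all eight components of the flux divergence vanish (in particular u × B = 0, so the induction fluxes vanish identically, and the momentum balance ∂_x(ρu₁²+Π₁₁) + ∂_y(ρu₁u₂+Π₁₂) = 0 and its y-counterpart hold). -/
/-- The conserved vector of the MHD vortex: `ρ ≡ 1`,
`u = κ_p e^{(1−r²)/2}(−y, x, 0)`, `B = m_p e^{(1−r²)/2}(−y, x, 0)`,
`p = 1 + ½(m_p²(1−r²) − κ_p²)e^{1−r²}`, `E = p/(γ−1) + ½|u|² + ½|B|²`. -/
noncomputable def vortexU (γ κp mp : ℝ) (x y : ℝ) : Fin 8 → ℝ :=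
  ![1,
    -κp * Real.exp ((1 - (x ^ 2 + y ^ 2)) / 2) * y,
    κp * Real.exp ((1 - (x ^ 2 + y ^ 2)) / 2) * x,
    0,
    (1 + (mp ^ 2 * (1 - (x ^ 2 + y ^ 2)) - κp ^ 2) / 2 * Real.exp (1 - (x ^ 2 + y ^ 2)))
        / (γ - 1)
      + ((-κp * Real.exp ((1 - (x ^ 2 + y ^ 2)) / 2) * y) ^ 2
          + (κp * Real.exp ((1 - (x ^ 2 + y ^ 2)) / 2) * x) ^ 2) / 2
      + ((-mp * Real.exp ((1 - (x ^ 2 + y ^ 2)) / 2) * y) ^ 2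
          + (mp * Real.exp ((1 - (x ^ 2 + y ^ 2)) / 2) * x) ^ 2) / 2,
    -mp * Real.exp ((1 - (x ^ 2 + y ^ 2)) / 2) * y,
    mp * Real.exp ((1 - (x ^ 2 + y ^ 2)) / 2) * x,
    0]

/-!
With `w = e^{(1-r²)/2}` the vortex has `u = κ_p w (-y, x)` and `B = m_p w (-y, x)`, so
`u × B = 0` and every flux is built from radial profiles and the rotation field `(-y, x)`.
Fluxes of the form `φ(r²) (-y, x)` (mass, energy) are divergence free for any profile `φ`.
The momentum flux is `(κ_p² - m_p²) w² (-y, x) ⊗ (-y, x) + p* I` with total pressure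
`p* = p + |B|²/2 = 1 - ½(κ_p² - m_p²) w²`, and the gradient of `p*` exactly balances the
centripetal divergence of the tensor part.
-/

open Real

def DivFreeAt (f g : ℝ → ℝ → ℝ) (x y : ℝ) : Prop :=
  ∃ a b : ℝ,
    HasDerivAt (fun x' => f x' y) a x ∧ HasDerivAt (fun y' => g x y') b y ∧ a + b = 0

theorem DivFreeAt.zero (x y : ℝ) : DivFreeAt (fun _ _ => 0) (fun _ _ => 0) x y :=
  ⟨0, 0, hasDerivAt_const x 0, hasDerivAt_const y 0, add_zero 0⟩

theorem deriv_add_deriv_eq_zero_of_forall_divFreeAt {ι : Type*} [Fintype ι]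
    {Φ Ψ : ℝ → ℝ → ι → ℝ} {x y : ℝ}
    (h : ∀ i, DivFreeAt (fun x y => Φ x y i) (fun x y => Ψ x y i) x y) :
    deriv (fun x' => Φ x' y) x + deriv (fun y' => Ψ x y') y = 0 := by
  choose a b ha hb hab using h
  rw [(hasDerivAt_pi.2 ha).deriv, (hasDerivAt_pi.2 hb).deriv]
  exact funext hab

theorem HasDerivAt.comp_sq_add_sq_left {φ : ℝ → ℝ} {φ' x y : ℝ}
    (h : HasDerivAt φ φ' (x ^ 2 + y ^ 2)) :
    HasDerivAt (fun t => φ (t ^ 2 + y ^ 2)) (φ' * (2 * x)) x := by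
  have hq : HasDerivAt (fun t : ℝ => t ^ 2 + y ^ 2) (2 * x) x := by
    simpa using (hasDerivAt_pow 2 x).add_const (y ^ 2)
  exact h.comp x hq

theorem HasDerivAt.comp_sq_add_sq_right {φ : ℝ → ℝ} {φ' x y : ℝ}
    (h : HasDerivAt φ φ' (x ^ 2 + y ^ 2)) :
    HasDerivAt (fun t => φ (x ^ 2 + t ^ 2)) (φ' * (2 * y)) y := by
  have hq : HasDerivAt (fun t : ℝ => x ^ 2 + t ^ 2) (2 * y) y := by
    simpa using (hasDerivAt_pow 2 y).const_add (x ^ 2)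
  exact h.comp y hq

theorem divFreeAt_swirl {φ : ℝ → ℝ} {x y : ℝ}
    (hφ : DifferentiableAt ℝ φ (x ^ 2 + y ^ 2)) :
    DivFreeAt (fun x y => -y * φ (x ^ 2 + y ^ 2)) (fun x y => x * φ (x ^ 2 + y ^ 2)) x y := by
  have h := hφ.hasDerivAt
  refine ⟨_, _, h.comp_sq_add_sq_left.const_mul (-y), h.comp_sq_add_sq_right.const_mul x, ?_⟩
  ring

/-- Rows of the flux `h(r²) (-y, x) ⊗ (-y, x) + P(r²) I`: the divergence of the tensor part is
`-h (x, y)`, which the pressure gradient `2 P' (x, y)` cancels when `P' = h / 2`. -/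
theorem divFreeAt_momentum_fst {h P : ℝ → ℝ} {x y : ℝ}
    (hh : DifferentiableAt ℝ h (x ^ 2 + y ^ 2))
    (hP : HasDerivAt P (h (x ^ 2 + y ^ 2) / 2) (x ^ 2 + y ^ 2)) :
    DivFreeAt (fun x y => y ^ 2 * h (x ^ 2 + y ^ 2) + P (x ^ 2 + y ^ 2))
      (fun x y => -x * y * h (x ^ 2 + y ^ 2)) x y := by
  have h' := hh.hasDerivAt
  refine ⟨_, _, (h'.comp_sq_add_sq_left.const_mul (y ^ 2)).add hP.comp_sq_add_sq_left,
    ((hasDerivAt_id' y).const_mul (-x)).mul h'.comp_sq_add_sq_right, ?_⟩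
  ring

theorem divFreeAt_momentum_snd {h P : ℝ → ℝ} {x y : ℝ}
    (hh : DifferentiableAt ℝ h (x ^ 2 + y ^ 2))
    (hP : HasDerivAt P (h (x ^ 2 + y ^ 2) / 2) (x ^ 2 + y ^ 2)) :
    DivFreeAt (fun x y => -x * y * h (x ^ 2 + y ^ 2))
      (fun x y => x ^ 2 * h (x ^ 2 + y ^ 2) + P (x ^ 2 + y ^ 2)) x y := by
  have h' := hh.hasDerivAt
  refine ⟨_, _, ((hasDerivAt_neg' x).mul_const y).mul h'.comp_sq_add_sq_left,
    (h'.comp_sq_add_sq_right.const_mul (x ^ 2)).add hP.comp_sq_add_sq_right, ?_⟩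
  ring

/- Radial profiles of the vortex as functions of `s = r²`: `u = vortexSwirl κp s • (-y, x)`,
`B = vortexSwirl mp s • (-y, x)`, `ρ u ⊗ u - B ⊗ B = vortexStress s • (-y, x) ⊗ (-y, x)`
and `vortexTotalPressure = p + |B|² / 2`. The energy flux is `u (E + p*) - B (u · B)`,
which is `vortexEnergyFlux s • (-y, x)` since
`E + p* - m_p² w² s = γ p / (γ - 1) + κ_p² w² s / 2`. -/
noncomputable def vortexSwirl (k s : ℝ) : ℝ := k * exp ((1 - s) / 2)

noncomputable def vortexPressure (κp mp s : ℝ) : ℝ :=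
  1 + (mp ^ 2 * (1 - s) - κp ^ 2) / 2 * exp (1 - s)

noncomputable def vortexStress (κp mp s : ℝ) : ℝ := (κp ^ 2 - mp ^ 2) * exp (1 - s)

noncomputable def vortexTotalPressure (κp mp s : ℝ) : ℝ :=
  1 - (κp ^ 2 - mp ^ 2) / 2 * exp (1 - s)

noncomputable def vortexEnergyFlux (γ κp mp s : ℝ) : ℝ :=
  vortexSwirl κp s * (γ / (γ - 1) * vortexPressure κp mp s + κp ^ 2 * s * exp (1 - s) / 2)

theorem exp_one_sub_eq_sq (s : ℝ) : exp (1 - s) = exp ((1 - s) / 2) ^ 2 := by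
  rw [sq, ← exp_add, add_halves]

theorem Fflux_vortexU {γ : ℝ} (hγ : γ ≠ 1) (κp mp x y : ℝ) :
    Fflux γ (vortexU γ κp mp x y) =
      ![-y * vortexSwirl κp (x ^ 2 + y ^ 2),
        y ^ 2 * vortexStress κp mp (x ^ 2 + y ^ 2) + vortexTotalPressure κp mp (x ^ 2 + y ^ 2),
        -x * y * vortexStress κp mp (x ^ 2 + y ^ 2),
        0,
        -y * vortexEnergyFlux γ κp mp (x ^ 2 + y ^ 2),
        0, 0, 0] := by
  have hγ' : γ - 1 ≠ 0 := sub_ne_zero.2 hγ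
  ext i
  fin_cases i <;>
    simp [Fflux, vortexU, pres, vortexSwirl, vortexPressure, vortexStress, vortexTotalPressure,
      vortexEnergyFlux, exp_one_sub_eq_sq] <;> field_simp <;> ring

theorem Gflux_vortexU {γ : ℝ} (hγ : γ ≠ 1) (κp mp x y : ℝ) :
    Gflux γ (vortexU γ κp mp x y) =
      ![x * vortexSwirl κp (x ^ 2 + y ^ 2),
        -x * y * vortexStress κp mp (x ^ 2 + y ^ 2),
        x ^ 2 * vortexStress κp mp (x ^ 2 + y ^ 2) + vortexTotalPressure κp mp (x ^ 2 + y ^ 2),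
        0,
        x * vortexEnergyFlux γ κp mp (x ^ 2 + y ^ 2),
        0, 0, 0] := by
  have hγ' : γ - 1 ≠ 0 := sub_ne_zero.2 hγ
  ext i
  fin_cases i <;>
    simp [Gflux, vortexU, pres, vortexSwirl, vortexPressure, vortexStress, vortexTotalPressure,
      vortexEnergyFlux, exp_one_sub_eq_sq] <;> field_simp <;> ring

theorem differentiable_vortexSwirl (k : ℝ) : Differentiable ℝ (vortexSwirl k) := by
  unfold vortexSwirl; fun_prop

theorem differentiable_vortexStress (κp mp : ℝ) : Differentiable ℝ (vortexStress κp mp) := by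
  unfold vortexStress; fun_prop

theorem differentiable_vortexEnergyFlux (γ κp mp : ℝ) :
    Differentiable ℝ (vortexEnergyFlux γ κp mp) := by
  unfold vortexEnergyFlux vortexPressure
  have := differentiable_vortexSwirl κp
  fun_prop

theorem hasDerivAt_vortexTotalPressure (κp mp s : ℝ) :
    HasDerivAt (vortexTotalPressure κp mp) (vortexStress κp mp s / 2) s := by
  have h := (((hasDerivAt_id' s).const_sub 1).exp.const_mul ((κp ^ 2 - mp ^ 2) / 2)).const_sub 1
  unfold vortexTotalPressure
  refine h.congr_deriv ?_
  simp only [vortexStress]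
  ring

theorem vortexU_cross_eq_zero (γ κp mp x y : ℝ) :
    vortexU γ κp mp x y 2 * vortexU γ κp mp x y 7
        - vortexU γ κp mp x y 3 * vortexU γ κp mp x y 6 = 0
      ∧ vortexU γ κp mp x y 3 * vortexU γ κp mp x y 5
          - vortexU γ κp mp x y 1 * vortexU γ κp mp x y 7 = 0
      ∧ vortexU γ κp mp x y 1 * vortexU γ κp mp x y 6
          - vortexU γ κp mp x y 2 * vortexU γ κp mp x y 5 = 0 := by
  refine ⟨by simp [vortexU], by simp [vortexU], ?_⟩
  simp only [vortexU, Matrix.cons_val]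
  ring

theorem vortex_stationary_general (γ κp mp : ℝ) (hγ : 1 < γ) :
    (∀ x y : ℝ,
      deriv (fun x' => Fflux γ (vortexU γ κp mp x' y)) x
        + deriv (fun y' => Gflux γ (vortexU γ κp mp x y')) y = 0)
    ∧ (∀ x y : ℝ,
        vortexU γ κp mp x y 2 * vortexU γ κp mp x y 7
            - vortexU γ κp mp x y 3 * vortexU γ κp mp x y 6 = 0
        ∧ vortexU γ κp mp x y 3 * vortexU γ κp mp x y 5
            - vortexU γ κp mp x y 1 * vortexU γ κp mp x y 7 = 0
        ∧ vortexU γ κp mp x y 1 * vortexU γ κp mp x y 6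
            - vortexU γ κp mp x y 2 * vortexU γ κp mp x y 5 = 0) := by
  refine ⟨fun x y => ?_, vortexU_cross_eq_zero γ κp mp⟩
  refine deriv_add_deriv_eq_zero_of_forall_divFreeAt
    (Φ := fun x y => Fflux γ (vortexU γ κp mp x y))
    (Ψ := fun x y => Gflux γ (vortexU γ κp mp x y))
    fun i => ?_
  simp only [Fflux_vortexU hγ.ne', Gflux_vortexU hγ.ne']
  have hStress := differentiable_vortexStress κp mp (x ^ 2 + y ^ 2)
  have hP := hasDerivAt_vortexTotalPressure κp mp (x ^ 2 + y ^ 2)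
  fin_cases i
  · exact divFreeAt_swirl (differentiable_vortexSwirl κp _)
  · exact divFreeAt_momentum_fst hStress hP
  · exact divFreeAt_momentum_snd hStress hP
  · exact DivFreeAt.zero x y
  · exact divFreeAt_swirl (differentiable_vortexEnergyFlux γ κp mp _)
  all_goals exact DivFreeAt.zero x y

/-- The MHD vortex is a stationary solution of the homogeneous ideal
MHD equations: provided the pressure is positive on the domain, `F(Ũ)_x + G(Ũ)_y = 0`
at every point (all eight components); in particular `u × B = 0`, so the induction fluxes
vanish identically. -/
theorem vortex_stationary (γ κp mp : ℝ) (hγ : 1 < γ)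
    (hp : ∀ x y : ℝ,
      0 < 1 + (mp ^ 2 * (1 - (x ^ 2 + y ^ 2)) - κp ^ 2) / 2
          * Real.exp (1 - (x ^ 2 + y ^ 2))) :
    (∀ x y : ℝ,
      deriv (fun x' => Fflux γ (vortexU γ κp mp x' y)) x
        + deriv (fun y' => Gflux γ (vortexU γ κp mp x y')) y = 0)
    ∧ (∀ x y : ℝ,
        vortexU γ κp mp x y 2 * vortexU γ κp mp x y 7
            - vortexU γ κp mp x y 3 * vortexU γ κp mp x y 6 = 0
        ∧ vortexU γ κp mp x y 3 * vortexU γ κp mp x y 5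
            - vortexU γ κp mp x y 1 * vortexU γ κp mp x y 7 = 0
        ∧ vortexU γ κp mp x y 1 * vortexU γ κp mp x y 6
            - vortexU γ κp mp x y 2 * vortexU γ κp mp x y 5 = 0) :=
  vortex_stationary_general γ κp mp hγ
end
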